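/- arXiv:1701.05807 — 5 statements merged into one kernel-verified Lean document; each statement's English description precedes it below -/
import Mathlib

section
/- Let α > 0, p ∈ (1,∞) with conjugate exponent p', and let (q_n) be an r-lacunary sequence of positive reals (i.e. q_{n+1} ≥ r q_n for all n, with r > 1). Then sup_n Σ_{k ≠ n} ( q_n^{1/p} q_k^{1/p'} / (q_n/p + q_k/p') )^α ≤ p'^α/(r^{α/p} − 1) + p^α/(r^{α/p'} − 1). -/
/-!
For `k < n` lacunarity gives `q k / q n ≤ r^{-(n-k)}`, and dropping `q k / p'` from the
denominator bounds the `k`-th term by `p^α (r^{-α/p'})^{n-k}`; symmetrically, for `k > n` dropping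
`q n / p` bounds it by `p'^α (r^{-α/p})^{k-n}`. Summing the two geometric series gives the bound.
-/

theorem div_le_inv_pow_of_lacunary {q : ℕ → ℝ} {r : ℝ} (hr : 0 < r) (hq : ∀ n, 0 < q n)
    (hlac : ∀ n, r * q n ≤ q (n + 1)) {k n : ℕ} (hkn : k ≤ n) :
    q k / q n ≤ (r ^ (n - k))⁻¹ := by
  obtain ⟨j, rfl⟩ := Nat.exists_eq_add_of_le hkn
  have hgrowth : r ^ j * q k ≤ q (k + j) :=
    geom_le (u := fun i => q (k + i)) hr.le j fun i _ => hlac (k + i)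
  rw [Nat.add_sub_cancel_left, div_le_iff₀ (hq _), inv_mul_eq_div, le_div_iff₀ (by positivity),
    mul_comm]
  exact hgrowth

theorem rpow_mul_rpow_div_add_le {a b p p' : ℝ} (ha : 0 < a) (hb : 0 ≤ b) (hp : 0 < p)
    (hp' : 0 < p') (hpp' : 1 / p + 1 / p' = 1) :
    a ^ (1 / p) * b ^ (1 / p') / (a / p + b / p') ≤ p * (b / a) ^ (1 / p') := by
  have hsplit : a ^ (1 / p) * a ^ (1 / p') = a := by
    rw [← Real.rpow_add ha, hpp', Real.rpow_one]
  calc a ^ (1 / p) * b ^ (1 / p') / (a / p + b / p')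
      ≤ a ^ (1 / p) * b ^ (1 / p') / (a / p) := by
        gcongr
        exact le_add_of_nonneg_right (by positivity)
    _ = p * (b / a) ^ (1 / p') := by
        have : a ^ (1 / p') ≠ 0 := by positivity
        rw [Real.div_rpow hb ha.le]
        field_simp
        linear_combination b ^ (1 / p') * hsplit

theorem inv_pow_rpow_comm {r : ℝ} (hr : 0 ≤ r) (m : ℕ) (c : ℝ) :
    ((r ^ m)⁻¹) ^ c = ((r ^ c)⁻¹) ^ m := by
  rw [Real.inv_rpow (pow_nonneg hr m), ← Real.rpow_pow_comm hr, inv_pow]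

theorem rpow_mul_rpow_div_add_rpow_le {a b p p' r α : ℝ} (ha : 0 < a) (hb : 0 ≤ b)
    (hp : 0 < p) (hp' : 0 < p') (hpp' : 1 / p + 1 / p' = 1) (hα : 0 ≤ α) (hr : 0 < r) {m : ℕ}
    (hba : b / a ≤ (r ^ m)⁻¹) :
    (a ^ (1 / p) * b ^ (1 / p') / (a / p + b / p')) ^ α ≤ p ^ α * ((r ^ (α / p'))⁻¹) ^ m := by
  calc (a ^ (1 / p) * b ^ (1 / p') / (a / p + b / p')) ^ α
      ≤ (p * (b / a) ^ (1 / p')) ^ α := by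
        gcongr
        exact rpow_mul_rpow_div_add_le ha hb hp hp' hpp'
    _ = p ^ α * (b / a) ^ (α / p') := by
        rw [Real.mul_rpow hp.le (by positivity), ← Real.rpow_mul (by positivity),
          one_div_mul_eq_div]
    _ ≤ p ^ α * ((r ^ m)⁻¹) ^ (α / p') := by gcongr
    _ = p ^ α * ((r ^ (α / p'))⁻¹) ^ m := by rw [inv_pow_rpow_comm hr.le]

theorem hasSum_inv_pow_succ {A : ℝ} (hA : 1 < A) :
    HasSum (fun j : ℕ => A⁻¹ ^ (j + 1)) (A - 1)⁻¹ := by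
  have hA0 : 0 < A := zero_lt_one.trans hA
  have h := (hasSum_geometric_of_lt_one (inv_nonneg.2 hA0.le) (inv_lt_one_of_one_lt₀ hA)).mul_left
    A⁻¹
  rw [← mul_inv, mul_sub, mul_one, mul_inv_cancel₀ hA0.ne'] at h
  simpa only [pow_succ'] using h

theorem tsum_ne_le_of_geometric_decay (n : ℕ) {f : ℕ → ℝ} {A B C D : ℝ} (hf : ∀ k, 0 ≤ f k)
    (hA : 1 < A) (hB : 1 < B) (hC : 0 ≤ C) (hD : 0 ≤ D)
    (hlt : ∀ k < n, f k ≤ C * A⁻¹ ^ (n - k)) (hgt : ∀ k, n < k → f k ≤ D * B⁻¹ ^ (k - n)) :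
    ∑' k : {k : ℕ // k ≠ n}, f k ≤ C / (A - 1) + D / (B - 1) := by
  -- the indices on either side of `n`, by their distance to `n` minus one
  let e : {k : ℕ // k ≠ n} → ℕ ⊕ ℕ := fun k =>
    if (k : ℕ) < n then .inl (n - 1 - k) else .inr (k - n - 1)
  let G : ℕ ⊕ ℕ → ℝ := Sum.elim (fun j => C * A⁻¹ ^ (j + 1)) (fun j => D * B⁻¹ ^ (j + 1))
  have hG : HasSum G (C / (A - 1) + D / (B - 1)) :=
    .sum (f := G) ((hasSum_inv_pow_succ hA).mul_left C) ((hasSum_inv_pow_succ hB).mul_left D)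
  have hG0 : ∀ x, 0 ≤ G x := by
    have := (zero_lt_one.trans hA).le
    have := (zero_lt_one.trans hB).le
    rintro (j | j)
    · show 0 ≤ C * A⁻¹ ^ (j + 1)
      positivity
    · show 0 ≤ D * B⁻¹ ^ (j + 1)
      positivity
  have he : Function.Injective e := by
    rintro ⟨a, ha⟩ ⟨b, hb⟩ h
    simp only [e] at h
    rw [Subtype.mk.injEq]
    split_ifs at h <;> simp only [Sum.inl.injEq, Sum.inr.injEq] at h <;> omega
  have hfG : ∀ k : {k : ℕ // k ≠ n}, f k ≤ G (e k) := by
    rintro ⟨k, hk⟩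
    by_cases hkn : k < n
    · simpa [e, G, hkn, show n - 1 - k + 1 = n - k by omega] using hlt k hkn
    · simpa [e, G, hkn, show k - n - 1 + 1 = k - n by omega] using hgt k (by omega)
  have hsum : Summable fun k : {k : ℕ // k ≠ n} => f k :=
    .of_nonneg_of_le (fun k => hf k) hfG (hG.summable.comp_injective he)
  calc ∑' k : {k : ℕ // k ≠ n}, f k ≤ ∑' x, G x :=
        hsum.tsum_le_tsum_of_inj e he (fun c _ => hG0 c) hfG hG.summable
    _ = C / (A - 1) + D / (B - 1) := hG.tsum_eq

theorem stmt1 (α p p' r : ℝ) (hα : 0 < α) (hp : 1 < p) (hr : 1 < r)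
    (hp' : 1/p + 1/p' = 1)
    (q : ℕ → ℝ) (hq0 : ∀ n, 0 < q n) (hlac : ∀ n, r * q n ≤ q (n+1)) :
    ∀ n : ℕ, ∑' k : {k : ℕ // k ≠ n},
        ((q n ^ (1/p) * q (k:ℕ) ^ (1/p')) / (q n / p + q (k:ℕ) / p')) ^ α
      ≤ p' ^ α / (r ^ (α/p) - 1) + p ^ α / (r ^ (α/p') - 1) := by
  intro n
  have hp0 : 0 < p := zero_lt_one.trans hp
  have hp'0 : 0 < p' := one_div_pos.1 (by linarith [(div_lt_one hp0).2 hp])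
  have hr0 : 0 < r := zero_lt_one.trans hr
  have hgrowth : ∀ {s : ℝ}, 0 < s → 1 < r ^ (α / s) := fun hs => Real.one_lt_rpow hr (by positivity)
  rw [add_comm]
  refine tsum_ne_le_of_geometric_decay n
    (f := fun k => (q n ^ (1/p) * q k ^ (1/p') / (q n / p + q k / p')) ^ α)
    (fun k => by have := hq0 n; have := hq0 k; positivity) (hgrowth hp'0) (hgrowth hp0)
    (by positivity) (by positivity) (fun k hk => ?_) (fun k hk => ?_)
  · exact rpow_mul_rpow_div_add_rpow_le (hq0 n) (hq0 k).le hp0 hp'0 hp' hα.le hr0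
      (div_le_inv_pow_of_lacunary hr0 hq0 hlac hk.le)
  · rw [mul_comm, add_comm]
    exact rpow_mul_rpow_div_add_rpow_le (hq0 k) (hq0 n).le hp'0 hp0 (by rwa [add_comm]) hα.le hr0
      (div_le_inv_pow_of_lacunary hr0 hq0 hlac hk.le)
end

section
/- Let α > 0 and let Λ = (λ_n) be an r-lacunary sequence of positive reals (λ_{n+1} ≥ r λ_n, r > 1). Then there exists a constant C > 0 such that for all t ∈ [0,1): Σ_n λ_n^α t^{λ_n} ≤ C (1/(1−t))^α. -/
open MeasureTheory Set

private lemma geom_partial_le {x : ℝ} (h0 : 0 ≤ x) (h1 : x < 1) (n : ℕ) :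
    ∑ i ∈ Finset.range n, x ^ i ≤ (1 - x)⁻¹ := by
  rw [← tsum_geometric_of_lt_one h0 h1]
  exact Summable.sum_le_tsum _ (fun i _ => pow_nonneg h0 i) (summable_geometric_of_lt_one h0 h1)

private lemma lac_grow {s : ℝ} (hs : 1 < s) (y : ℕ → ℝ)
    (hlac : ∀ n, s * y n ≤ y (n+1)) : ∀ k i, s ^ k * y i ≤ y (i + k) := by
  intro k
  induction k with
  | zero => simp
  | succ k ih =>
    intro i
    have h1 : s ^ (k+1) * y i = s * (s ^ k * y i) := by ring
    calc s ^ (k+1) * y i = s * (s ^ k * y i) := h1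
      _ ≤ s * y (i + k) := by
          have := ih i
          nlinarith [this, (by linarith : (0:ℝ) < s)]
      _ ≤ y (i + k + 1) := hlac _

private lemma key_min_sum {s : ℝ} (hs : 1 < s) (y : ℕ → ℝ) (hy : ∀ n, 0 < y n)
    (hlac : ∀ n, s * y n ≤ y (n+1)) (N : ℕ) :
    ∑ i ∈ Finset.range N, min (y i) (y i)⁻¹ ≤ 2 * (1 - 1/s)⁻¹ := by
  have hs0 : (0:ℝ) < s := by linarith
  have hinv0 : (0:ℝ) ≤ 1/s := by positivity
  have hinv1 : 1/s < 1 := by rw [div_lt_one hs0]; exact hs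
  have hgrow := lac_grow hs y hlac
  -- there is an index with y n > 1
  have hex : ∃ n, 1 < y n := by
    obtain ⟨n, hn⟩ := pow_unbounded_of_one_lt (y 0)⁻¹ hs
    refine ⟨n, ?_⟩
    have h1 : (y 0)⁻¹ * y 0 < s ^ n * y 0 := by
      apply mul_lt_mul_of_pos_right hn (hy 0)
    rw [inv_mul_cancel₀ (hy 0).ne'] at h1
    calc (1:ℝ) < s ^ n * y 0 := h1
      _ ≤ y (0 + n) := hgrow n 0
      _ = y n := by rw [Nat.zero_add]
  set K := Nat.find hex with hKdef
  have hK : 1 < y K := Nat.find_spec hex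
  have hKm : ∀ m, m < K → y m ≤ 1 := fun m hm => le_of_not_gt (Nat.find_min hex hm)
  -- pointwise bound
  have hpt : ∀ i, min (y i) (y i)⁻¹ ≤ if i < K then (1/s) ^ (K - 1 - i) else (1/s) ^ (i - K) := by
    intro i
    by_cases hi : i < K
    · simp only [hi, if_true]
      have hiK : i + (K - 1 - i) = K - 1 := by omega
      have h1 : s ^ (K - 1 - i) * y i ≤ y (K - 1) := by
        have := hgrow (K - 1 - i) i
        rwa [hiK] at this
      have h2 : y (K - 1) ≤ 1 := hKm _ (by omega)
      have h3 : y i ≤ (1/s) ^ (K - 1 - i) := by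
        have hp : (0:ℝ) < s ^ (K - 1 - i) := by positivity
        rw [one_div, inv_pow, inv_eq_one_div, le_div_iff₀ hp]
        calc y i * s ^ (K - 1 - i) = s ^ (K - 1 - i) * y i := mul_comm _ _
          _ ≤ y (K-1) := h1
          _ ≤ 1 := h2
      exact le_trans (min_le_left _ _) h3
    · simp only [hi, if_false]
      push_neg at hi
      have hiK : K + (i - K) = i := by omega
      have h1 : s ^ (i - K) * y K ≤ y i := by
        have := hgrow (i - K) K
        rwa [hiK] at this
      have h2 : s ^ (i - K) ≤ y i := by
        calc s ^ (i-K) = s ^ (i-K) * 1 := by ring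
          _ ≤ s ^ (i-K) * y K := by
              apply mul_le_mul_of_nonneg_left hK.le (by positivity)
          _ ≤ y i := h1
      have h3 : (y i)⁻¹ ≤ (1/s) ^ (i - K) := by
        rw [one_div, inv_pow]
        exact inv_anti₀ (by positivity) h2
      exact le_trans (min_le_right _ _) h3
  calc ∑ i ∈ Finset.range N, min (y i) (y i)⁻¹
      ≤ ∑ i ∈ Finset.range N, (if i < K then (1/s) ^ (K - 1 - i) else (1/s) ^ (i - K)) :=
        Finset.sum_le_sum (fun i _ => hpt i)
    _ ≤ ∑ i ∈ Finset.range (K + N), (if i < K then (1/s) ^ (K - 1 - i) else (1/s) ^ (i - K)) := by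
        apply Finset.sum_le_sum_of_subset_of_nonneg
        · exact Finset.range_subset_range.mpr (by omega)
        · intro i _ _; positivity
    _ = (∑ i ∈ Finset.range K, (if i < K then (1/s) ^ (K - 1 - i) else (1/s) ^ (i - K)))
        + ∑ i ∈ Finset.range N,
            (if K + i < K then (1/s) ^ (K - 1 - (K + i)) else (1/s) ^ (K + i - K)) :=
        Finset.sum_range_add _ K N
    _ = (∑ i ∈ Finset.range K, (1/s) ^ (K - 1 - i)) + ∑ i ∈ Finset.range N, (1/s) ^ i := by
        congr 1
        · apply Finset.sum_congr rfl
          intro i hi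
          rw [if_pos (Finset.mem_range.mp hi)]
        · apply Finset.sum_congr rfl
          intro i _
          rw [if_neg (by omega)]
          congr 1
          omega
    _ ≤ (1 - 1/s)⁻¹ + (1 - 1/s)⁻¹ := by
        apply add_le_add _ (geom_partial_le hinv0 hinv1 N)
        calc ∑ i ∈ Finset.range K, (1/s) ^ (K - 1 - i)
            = ∑ i ∈ Finset.range K, (1/s) ^ i :=
              Finset.sum_range_reflect (fun i => (1/s) ^ i) K
          _ ≤ (1 - 1/s)⁻¹ := geom_partial_le hinv0 hinv1 K
    _ = 2 * (1 - 1/s)⁻¹ := by ring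

private lemma term_bound {α x : ℝ} (hα : 0 < α) (hx : 0 < x) :
    x ^ α * Real.exp (-x) ≤ (Nat.factorial (Nat.ceil (2*α)) : ℝ) * min (x ^ α) ((x ^ α)⁻¹) := by
  set m := Nat.ceil (2*α) with hm
  have hM1 : (1:ℝ) ≤ (Nat.factorial m : ℝ) := by exact_mod_cast Nat.one_le_iff_ne_zero.mpr (Nat.factorial_ne_zero m)
  rcases le_or_gt x 1 with h1 | h1
  · -- x ≤ 1 : min = x^α
    have hxa1 : x ^ α ≤ 1 := Real.rpow_le_one hx.le h1 hα.le
    have hmin : min (x ^ α) ((x ^ α)⁻¹) = x ^ α := by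
      apply min_eq_left
      calc x ^ α ≤ 1 := hxa1
        _ ≤ (x ^ α)⁻¹ := one_le_inv_iff₀.mpr ⟨Real.rpow_pos_of_pos hx α, hxa1⟩
    rw [hmin]
    calc x ^ α * Real.exp (-x) ≤ x ^ α * 1 := by
          apply mul_le_mul_of_nonneg_left _ (Real.rpow_pos_of_pos hx α).le
          exact Real.exp_le_one_iff.mpr (by linarith)
      _ = 1 * x ^ α := by ring
      _ ≤ (Nat.factorial m : ℝ) * x ^ α := by
          apply mul_le_mul_of_nonneg_right hM1 (Real.rpow_pos_of_pos hx α).le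
  · -- 1 < x
    have hx2a : x ^ (2*α) ≤ (Nat.factorial m : ℝ) * Real.exp x := by
      calc x ^ (2*α) ≤ x ^ (m:ℝ) := Real.rpow_le_rpow_of_exponent_le h1.le (Nat.le_ceil _)
        _ = x ^ m := Real.rpow_natCast x m
        _ ≤ (Nat.factorial m : ℝ) * Real.exp x := by
            have hsum : x ^ m / (Nat.factorial m : ℝ) ≤ Real.exp x := by
              calc x ^ m / (Nat.factorial m : ℝ) ≤ ∑ i ∈ Finset.range (m+1), x ^ i / (Nat.factorial i : ℝ) := by
                    apply Finset.single_le_sum (f := fun i => x ^ i / (Nat.factorial i : ℝ))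
                    · intro i _; positivity
                    · exact Finset.self_mem_range_succ m
                _ ≤ Real.exp x := Real.sum_le_exp_of_nonneg (by linarith) _
            rw [div_le_iff₀ (by positivity)] at hsum
            linarith [hsum]
    have hmin : min (x ^ α) ((x ^ α)⁻¹) = (x ^ α)⁻¹ := by
      apply min_eq_right
      have h2 : 1 ≤ x ^ α := Real.one_le_rpow h1.le hα.le
      calc (x ^ α)⁻¹ ≤ 1 := inv_le_one_of_one_le₀ h2
        _ ≤ x ^ α := h2
    rw [hmin]
    have hxa : (0:ℝ) < x ^ α := Real.rpow_pos_of_pos hx α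
    rw [Real.exp_neg]
    rw [mul_inv_le_iff₀ (Real.exp_pos x), mul_assoc, mul_comm ((x^α)⁻¹) (Real.exp x),
      ← mul_assoc]
    have key : x ^ α * x ^ α ≤ (Nat.factorial m : ℝ) * Real.exp x := by
      have hxx : x ^ α * x ^ α = x ^ (2*α) := by
        rw [← Real.rpow_add hx]
        norm_num
        ring_nf
      rw [hxx]
      exact hx2a
    calc x ^ α = x ^ α * (x ^ α * (x ^ α)⁻¹) := by
          rw [mul_inv_cancel₀ hxa.ne', mul_one]
      _ = (x ^ α * x ^ α) * (x ^ α)⁻¹ := by ring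
      _ ≤ ((Nat.factorial m : ℝ) * Real.exp x) * (x ^ α)⁻¹ := by
          apply mul_le_mul_of_nonneg_right key (by positivity)

theorem stmt3 (α r : ℝ) (hα : 0 < α) (hr : 1 < r)
    (lam : ℕ → ℝ) (hpos : ∀ n, 0 < lam n)
    (hlac : ∀ n, r * lam n ≤ lam (n+1)) :
    ∃ C : ℝ, 0 < C ∧ ∀ t ∈ Set.Ico (0:ℝ) 1,
      ∑' n, lam n ^ α * t ^ lam n ≤ C * (1/(1-t)) ^ α := by
  set m := Nat.ceil (2*α) with hm
  set s : ℝ := r ^ α with hs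
  have hs1 : 1 < s := by
    rw [hs, Real.one_lt_rpow_iff_of_pos (by linarith)]
    exact Or.inl ⟨hr, hα⟩
  have hM1 : (1:ℝ) ≤ (Nat.factorial m : ℝ) := by exact_mod_cast Nat.one_le_iff_ne_zero.mpr (Nat.factorial_ne_zero m)
  have hinv : (0:ℝ) < (1 - 1/s)⁻¹ := by
    apply inv_pos.mpr
    have : 1/s < 1 := by rw [div_lt_one (by linarith)]; exact hs1
    linarith
  refine ⟨(Nat.factorial m : ℝ) * (2 * (1 - 1/s)⁻¹), by positivity, ?_⟩
  intro t ht
  obtain ⟨ht0, ht1⟩ := ht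
  set u : ℝ := 1 - t with hu
  have hu0 : 0 < u := by simp [hu]; linarith
  have hterm_nonneg : ∀ n, 0 ≤ lam n ^ α * t ^ lam n := by
    intro n
    have := Real.rpow_nonneg ht0 (lam n)
    have := Real.rpow_nonneg (hpos n).le α
    positivity
  apply Real.tsum_le_of_sum_range_le hterm_nonneg
  intro N
  -- the lacunary sequence y n = (u * lam n)^α
  set y : ℕ → ℝ := fun n => (u * lam n) ^ α with hy
  have hypos : ∀ n, 0 < y n := fun n => Real.rpow_pos_of_pos (mul_pos hu0 (hpos n)) α
  have hylac : ∀ n, s * y n ≤ y (n+1) := by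
    intro n
    have h1 : (r * (u * lam n)) ^ α ≤ (u * lam (n+1)) ^ α := by
      apply Real.rpow_le_rpow (mul_nonneg (by linarith) (mul_pos hu0 (hpos n)).le) _ hα.le
      calc r * (u * lam n) = u * (r * lam n) := by ring
        _ ≤ u * lam (n+1) := by
            apply mul_le_mul_of_nonneg_left (hlac n) hu0.le
    calc s * y n = (r * (u * lam n)) ^ α := by
          rw [hy, hs, Real.mul_rpow (by linarith : (0:ℝ) ≤ r) (mul_pos hu0 (hpos n)).le]
      _ ≤ y (n+1) := h1
  -- pointwise bound on terms
  have hub : ∀ n, lam n ^ α * t ^ lam n ≤ (1/u) ^ α * ((Nat.factorial m : ℝ) * min (y n) ((y n)⁻¹)) := by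
    intro n
    have hln := hpos n
    have h1 : t ^ lam n ≤ Real.exp (-u * lam n) := by
      calc t ^ lam n ≤ (Real.exp (-u)) ^ lam n := by
            apply Real.rpow_le_rpow ht0 _ hln.le
            have := Real.add_one_le_exp (-u)
            linarith
        _ = Real.exp (-u * lam n) := by
            rw [Real.exp_mul]
    have h2 : lam n ^ α * t ^ lam n ≤ lam n ^ α * Real.exp (-(u * lam n)) := by
      apply mul_le_mul_of_nonneg_left _ (Real.rpow_nonneg hln.le α)
      rw [neg_mul] at h1
      exact h1
    have h3 : (u * lam n) ^ α * Real.exp (-(u * lam n)) ≤ (Nat.factorial m : ℝ) * min (y n) ((y n)⁻¹) :=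
      term_bound hα (by positivity)
    have h4 : lam n ^ α = (1/u) ^ α * (u * lam n) ^ α := by
      rw [Real.mul_rpow hu0.le hln.le, one_div, Real.inv_rpow hu0.le]
      rw [← mul_assoc, inv_mul_cancel₀ (Real.rpow_pos_of_pos hu0 α).ne', one_mul]
    calc lam n ^ α * t ^ lam n ≤ lam n ^ α * Real.exp (-(u * lam n)) := h2
      _ = (1/u) ^ α * ((u * lam n) ^ α * Real.exp (-(u * lam n))) := by rw [h4]; ring
      _ ≤ (1/u) ^ α * ((Nat.factorial m : ℝ) * min (y n) ((y n)⁻¹)) := by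
          apply mul_le_mul_of_nonneg_left h3 (Real.rpow_nonneg (by positivity) α)
  calc ∑ n ∈ Finset.range N, lam n ^ α * t ^ lam n
      ≤ ∑ n ∈ Finset.range N, (1/u) ^ α * ((Nat.factorial m : ℝ) * min (y n) ((y n)⁻¹)) :=
        Finset.sum_le_sum (fun n _ => hub n)
    _ = (1/u) ^ α * (Nat.factorial m : ℝ) * ∑ n ∈ Finset.range N, min (y n) ((y n)⁻¹) := by
        rw [Finset.mul_sum]
        apply Finset.sum_congr rfl
        intros; ring
    _ ≤ (1/u) ^ α * (Nat.factorial m : ℝ) * (2 * (1 - 1/s)⁻¹) := by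
        apply mul_le_mul_of_nonneg_left (key_min_sum hs1 y hypos hylac N)
        have := Real.rpow_nonneg (by positivity : (0:ℝ) ≤ 1/u) α
        positivity
    _ = (Nat.factorial m : ℝ) * (2 * (1 - 1/s)⁻¹) * (1/(1-t)) ^ α := by
        rw [hu]; ring
end

section
/- Let p ∈ [1,∞) and let Λ = (λ_n) be a lacunary sequence of positive reals. With weights w_n = λ_n^{-1} and μ equal to Lebesgue measure on [0,1], the sequence D_n(p) = (λ_n^{1/p} ∫_0^1 t^{λ_n} (Σ_k λ_k^{1/p} t^{λ_k})^{p-1} dt)^{1/p} is bounded. Consequently, there exists a constant C (depending on p and Λ) such that for every finitely supported sequence b, ‖Σ_n b_n t^{λ_n}‖_{L^p([0,1])} ≤ C (Σ_n |b_n|^p / λ_n)^{1/p}. -/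
/-!
Put `S(t) = ∑ₖ λₖ^{1/p} t^{λₖ}` and `t = e^{-s}`, so that
`s^{1/p} S(t) = ∑ₖ (λₖ s)^{1/p} e^{-λₖ s}`.
By lacunarity the terms with `λₖ s ≤ 1` are dominated by a geometric series counted down from the
largest such index, and those with `λₖ s > 1` by one counted up from the smallest, so
`S(t) ≤ B s^{-1/p} ≤ B (1 - t)^{-1/p}` with `B` depending only on `p` and `r`.

Both claims follow from this bound alone. Hölder's inequality with the weights `λₙ^{1/p} t^{λₙ}`
gives `|∑ bₙ t^{λₙ}|^p ≤ B^{p-1} ∑ |bₙ|^p λₙ^{1/p-1} t^{λₙ} (1-t)^{1/p-1}`, and since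
`(1 - u)^λ ≤ e^{-λu}`, `∫₀¹ t^λ (1-t)^{a-1} dt ≤ Γ(a) λ^{-a}`. Hence `D_n(p)^p` and
`‖∑ bₙ t^{λₙ}‖ₚ^p / ∑ |bₙ|^p / λₙ` are both at most `B^{p-1} Γ(1/p)`.
-/

open MeasureTheory Set

theorem sum_le_inv_one_sub_of_le_pow {ι : Type*} {y : ℝ} (hy0 : 0 ≤ y) (hy1 : y < 1)
    {s : Finset ι} {f : ι → ℝ} {g : ι → ℕ} (hg : InjOn g s) (hf : ∀ i ∈ s, f i ≤ y ^ g i) :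
    ∑ i ∈ s, f i ≤ (1 - y)⁻¹ := by
  classical
  calc ∑ i ∈ s, f i ≤ ∑ i ∈ s, y ^ g i := Finset.sum_le_sum hf
    _ = ∑ k ∈ s.image g, y ^ k := (Finset.sum_image hg).symm
    _ ≤ ∑' k, y ^ k :=
      (summable_geometric_of_lt_one hy0 hy1).sum_le_tsum _ fun k _ => pow_nonneg hy0 k
    _ = (1 - y)⁻¹ := tsum_geometric_of_lt_one hy0 hy1

theorem rpow_mul_exp_neg_le_two_mul_rpow_neg {u α : ℝ} (hu : 1 ≤ u) (hα : α ≤ 1) :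
    u ^ α * Real.exp (-u) ≤ 2 * u ^ (-α) := by
  have hu0 : 0 < u := by linarith
  have hsq : u ^ (2 * α) ≤ 2 * Real.exp u := by
    calc u ^ (2 * α) ≤ u ^ (2 : ℝ) := Real.rpow_le_rpow_of_exponent_le hu (by linarith)
      _ ≤ 2 * Real.exp u := by
        have := Real.pow_div_factorial_le_exp u hu0.le 2
        norm_num at this ⊢
        linarith
  calc u ^ α * Real.exp (-u) = u ^ (-α) * u ^ (2 * α) * Real.exp (-u) := by
        rw [← Real.rpow_add hu0]; ring_nf
    _ ≤ u ^ (-α) * (2 * Real.exp u) * Real.exp (-u) := by gcongr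
    _ = 2 * u ^ (-α) := by
        rw [mul_assoc, mul_assoc, ← Real.exp_add, add_neg_cancel, Real.exp_zero]; ring

section Lacunary

variable {r : ℝ} {lam : ℕ → ℝ}

theorem pow_mul_le_of_lacunary (hr : 0 ≤ r) (hlac : ∀ n, r * lam n ≤ lam (n + 1)) (n k : ℕ) :
    r ^ k * lam n ≤ lam (n + k) := by
  induction k with
  | zero => simp
  | succ k ih =>
    calc r ^ (k + 1) * lam n = r * (r ^ k * lam n) := by ring
      _ ≤ r * lam (n + k) := mul_le_mul_of_nonneg_left ih hr
      _ ≤ lam (n + k + 1) := hlac (n + k)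

theorem sum_rpow_le_of_lacunary_of_le_one (hr : 1 < r) (hpos : ∀ n, 0 < lam n)
    (hlac : ∀ n, r * lam n ≤ lam (n + 1)) {α s : ℝ} (hα : 0 < α) (hs : 0 < s) (F : Finset ℕ) :
    ∑ n ∈ F with lam n * s ≤ 1, (lam n * s) ^ α ≤ (1 - (r ^ α)⁻¹)⁻¹ := by
  have hrα : 1 < r ^ α := Real.one_lt_rpow hr hα
  have hy0 : 0 ≤ (r ^ α)⁻¹ := by positivity
  have hy1 : (r ^ α)⁻¹ < 1 := inv_lt_one_of_one_lt₀ hrα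
  rcases (F.filter fun n => lam n * s ≤ 1).eq_empty_or_nonempty with hF | hF
  · rw [hF, Finset.sum_empty]
    exact (inv_pos.2 (sub_pos.2 hy1)).le
  obtain ⟨m, hm, hmax⟩ := Finset.exists_max_image _ id hF
  refine sum_le_inv_one_sub_of_le_pow hy0 hy1 (g := fun n => m - n) ?_ fun n hn => ?_
  · intro i hi j hj hij
    have := hmax i hi; have := hmax j hj; simp only [id] at *; omega
  have hnm : n ≤ m := hmax n hn
  have hr0 : 0 < r ^ (m - n) := by positivity
  have hlm : lam n * s ≤ (r ^ (m - n))⁻¹ := by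
    have := pow_mul_le_of_lacunary (by linarith) hlac n (m - n)
    rw [Nat.add_sub_cancel' hnm] at this
    rw [← one_div, le_div_iff₀' hr0]
    calc r ^ (m - n) * (lam n * s) = r ^ (m - n) * lam n * s := by ring
      _ ≤ lam m * s := by gcongr
      _ ≤ 1 := (Finset.mem_filter.1 hm).2
  calc (lam n * s) ^ α ≤ ((r ^ (m - n))⁻¹) ^ α :=
        Real.rpow_le_rpow (mul_pos (hpos n) hs).le hlm hα.le
    _ = (r ^ α)⁻¹ ^ (m - n) := by
        rw [Real.inv_rpow hr0.le, ← Real.rpow_pow_comm (by linarith), inv_pow]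

theorem sum_rpow_neg_le_of_lacunary_of_one_lt (hr : 1 < r)
    (hlac : ∀ n, r * lam n ≤ lam (n + 1)) {α s : ℝ} (hα : 0 < α) (hs : 0 < s) (F : Finset ℕ) :
    ∑ n ∈ F with 1 < lam n * s, (lam n * s) ^ (-α) ≤ (1 - (r ^ α)⁻¹)⁻¹ := by
  have hrα : 1 < r ^ α := Real.one_lt_rpow hr hα
  have hy0 : 0 ≤ (r ^ α)⁻¹ := by positivity
  have hy1 : (r ^ α)⁻¹ < 1 := inv_lt_one_of_one_lt₀ hrα
  rcases (F.filter fun n => 1 < lam n * s).eq_empty_or_nonempty with hF | hF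
  · rw [hF, Finset.sum_empty]
    exact (inv_pos.2 (sub_pos.2 hy1)).le
  obtain ⟨m, hm, hmin⟩ := Finset.exists_min_image _ id hF
  refine sum_le_inv_one_sub_of_le_pow hy0 hy1 (g := fun n => n - m) ?_ fun n hn => ?_
  · intro i hi j hj hij
    have := hmin i hi; have := hmin j hj; simp only [id] at *; omega
  have hmn : m ≤ n := hmin n hn
  have hlm : r ^ (n - m) ≤ lam n * s := by
    have := pow_mul_le_of_lacunary (by linarith) hlac m (n - m)
    rw [Nat.add_sub_cancel' hmn] at this
    calc r ^ (n - m) = r ^ (n - m) * 1 := (mul_one _).symm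
      _ ≤ r ^ (n - m) * (lam m * s) := by gcongr; exact (Finset.mem_filter.1 hm).2.le
      _ = r ^ (n - m) * lam m * s := by ring
      _ ≤ lam n * s := by gcongr
  calc (lam n * s) ^ (-α) ≤ (r ^ (n - m)) ^ (-α) :=
        Real.rpow_le_rpow_of_nonpos (by positivity) hlm (by linarith)
    _ = (r ^ α)⁻¹ ^ (n - m) := by
        rw [Real.rpow_neg (by positivity), ← Real.rpow_pow_comm (by linarith), inv_pow]

theorem sum_rpow_mul_exp_neg_le_of_lacunary (hr : 1 < r) (hpos : ∀ n, 0 < lam n)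
    (hlac : ∀ n, r * lam n ≤ lam (n + 1)) {α s : ℝ} (hα0 : 0 < α) (hα1 : α ≤ 1) (hs : 0 < s)
    (F : Finset ℕ) :
    ∑ n ∈ F, (lam n * s) ^ α * Real.exp (-(lam n * s)) ≤ 3 * (1 - (r ^ α)⁻¹)⁻¹ := by
  rw [← Finset.sum_filter_add_sum_filter_not F fun n => lam n * s ≤ 1]
  have hsmall : ∑ n ∈ F with lam n * s ≤ 1, (lam n * s) ^ α * Real.exp (-(lam n * s))
      ≤ ∑ n ∈ F with lam n * s ≤ 1, (lam n * s) ^ α := by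
    refine Finset.sum_le_sum fun n _ => mul_le_of_le_one_right ?_ ?_
    · exact Real.rpow_nonneg (mul_pos (hpos n) hs).le _
    · exact Real.exp_le_one_iff.2 (neg_nonpos.2 (mul_pos (hpos n) hs).le)
  have hlarge : ∑ n ∈ F with ¬lam n * s ≤ 1, (lam n * s) ^ α * Real.exp (-(lam n * s))
      ≤ 2 * ∑ n ∈ F with 1 < lam n * s, (lam n * s) ^ (-α) := by
    simp only [not_le, Finset.mul_sum]
    exact Finset.sum_le_sum fun n hn =>
      rpow_mul_exp_neg_le_two_mul_rpow_neg (Finset.mem_filter.1 hn).2.le hα1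
  linarith [sum_rpow_le_of_lacunary_of_le_one hr hpos hlac hα0 hs F,
    sum_rpow_neg_le_of_lacunary_of_one_lt hr hlac hα0 hs F]

theorem sum_rpow_mul_rpow_le_of_lacunary (hr : 1 < r) (hpos : ∀ n, 0 < lam n)
    (hlac : ∀ n, r * lam n ≤ lam (n + 1)) {α : ℝ} (hα0 : 0 < α) (hα1 : α ≤ 1) {t : ℝ}
    (ht : t ∈ Ioo 0 1) (F : Finset ℕ) :
    ∑ n ∈ F, lam n ^ α * t ^ lam n ≤ 3 * (1 - (r ^ α)⁻¹)⁻¹ * (1 - t) ^ (-α) := by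
  obtain ⟨ht0, ht1⟩ := ht
  set s := -Real.log t
  have hs : 0 < s := neg_pos.2 (Real.log_neg ht0 ht1)
  have hts : 1 - t ≤ s := by linarith [Real.log_le_sub_one_of_pos ht0]
  have hterm : ∀ n,
      lam n ^ α * t ^ lam n = s ^ (-α) * ((lam n * s) ^ α * Real.exp (-(lam n * s))) := by
    intro n
    have hexp : Real.exp (-(lam n * s)) = t ^ lam n := by
      rw [Real.rpow_def_of_pos ht0]; congr 1; simp only [s]; ring
    rw [Real.mul_rpow (hpos n).le hs.le, hexp, Real.rpow_neg hs.le]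
    field_simp
  calc ∑ n ∈ F, lam n ^ α * t ^ lam n
      = s ^ (-α) * ∑ n ∈ F, (lam n * s) ^ α * Real.exp (-(lam n * s)) := by
        simp only [hterm, Finset.mul_sum]
    _ ≤ s ^ (-α) * (3 * (1 - (r ^ α)⁻¹)⁻¹) := by
        gcongr
        exact sum_rpow_mul_exp_neg_le_of_lacunary hr hpos hlac hα0 hα1 hs F
    _ ≤ (1 - t) ^ (-α) * (3 * (1 - (r ^ α)⁻¹)⁻¹) := by
        gcongr ?_ * _
        · have : 1 < r ^ α := Real.one_lt_rpow hr hα0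
          have : (r ^ α)⁻¹ < 1 := inv_lt_one_of_one_lt₀ this
          have : 0 < 1 - (r ^ α)⁻¹ := by linarith
          positivity
        exact Real.rpow_le_rpow_of_nonpos (by linarith) hts (by linarith)
    _ = _ := mul_comm _ _

end Lacunary

theorem integrableOn_rpow_mul_one_sub_rpow {a l : ℝ} (ha : 0 < a) (hl : 0 ≤ l) :
    IntegrableOn (fun t : ℝ => t ^ l * (1 - t) ^ (a - 1)) (Ioo (0 : ℝ) 1) := by
  have hg : IntegrableOn (fun t : ℝ => (1 - t) ^ (a - 1)) (Icc 0 1) := by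
    have := (intervalIntegral.intervalIntegrable_rpow' (a := 1) (b := 0)
      (by linarith : -1 < a - 1)).comp_sub_left 1
    rw [sub_self, sub_zero, intervalIntegrable_iff_integrableOn_Ioc_of_le zero_le_one] at this
    rwa [integrableOn_Icc_iff_integrableOn_Ioc]
  refine (hg.continuousOn_mul ?_ isCompact_Icc).mono_set Ioo_subset_Icc_self
  exact fun t ht => (Real.continuousAt_rpow_const t l (Or.inr hl)).continuousWithinAt

theorem integral_rpow_mul_one_sub_rpow_le {a l : ℝ} (ha : 0 < a) (hl : 0 < l) :
    ∫ t in Ioo (0 : ℝ) 1, t ^ l * (1 - t) ^ (a - 1) ≤ Real.Gamma a * l ^ (-a) := by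
  have hg : IntegrableOn (fun u : ℝ => u ^ (a - 1) * Real.exp (-(l * u))) (Ioi 0) :=
    (integrableOn_rpow_mul_exp_neg_mul_rpow (s := a - 1) (by linarith) one_pos hl).congr_fun
      (fun u _ => by simp only [Real.rpow_one, neg_mul]) measurableSet_Ioi
  have hflip : ∫ t in Ioo (0 : ℝ) 1, t ^ l * (1 - t) ^ (a - 1)
      = ∫ u in Ioc (0 : ℝ) 1, u ^ (a - 1) * (1 - u) ^ l := by
    rw [← integral_Ioc_eq_integral_Ioo, ← intervalIntegral.integral_of_le zero_le_one,
      ← intervalIntegral.integral_of_le zero_le_one]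
    simpa [mul_comm] using intervalIntegral.integral_comp_sub_left (a := 0) (b := 1)
      (fun u : ℝ => u ^ (a - 1) * (1 - u) ^ l) 1
  calc ∫ t in Ioo (0 : ℝ) 1, t ^ l * (1 - t) ^ (a - 1)
      = ∫ u in Ioc (0 : ℝ) 1, u ^ (a - 1) * (1 - u) ^ l := hflip
    _ ≤ ∫ u in Ioc (0 : ℝ) 1, u ^ (a - 1) * Real.exp (-(l * u)) := by
        refine integral_mono_of_nonneg ?_ (hg.mono_set Ioc_subset_Ioi_self) ?_
        · filter_upwards [ae_restrict_mem measurableSet_Ioc] with u hu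
          exact mul_nonneg (Real.rpow_nonneg hu.1.le _) (Real.rpow_nonneg (by linarith [hu.2]) _)
        · filter_upwards [ae_restrict_mem measurableSet_Ioc] with u hu
          refine mul_le_mul_of_nonneg_left ?_ (Real.rpow_nonneg hu.1.le _)
          calc (1 - u) ^ l ≤ Real.exp (-u) ^ l :=
                Real.rpow_le_rpow (by linarith [hu.2]) (Real.one_sub_le_exp_neg u) hl.le
            _ = Real.exp (-(l * u)) := by rw [← Real.exp_mul]; ring_nf
    _ ≤ ∫ u in Ioi (0 : ℝ), u ^ (a - 1) * Real.exp (-(l * u)) :=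
        setIntegral_mono_set hg
          (ae_restrict_of_forall_mem measurableSet_Ioi fun u hu => by have := hu.out; positivity)
          Ioc_subset_Ioi_self.eventuallyLE
    _ = Real.Gamma a * l ^ (-a) := by
        rw [Real.integral_rpow_mul_exp_neg_mul_Ioi ha hl, one_div, Real.inv_rpow hl.le,
          Real.rpow_neg hl.le, mul_comm]

theorem abs_sum_rpow_le_sum_rpow_mul_sum_div {ι : Type*} (s : Finset ι) {p : ℝ} (hp : 1 ≤ p)
    {w : ι → ℝ} (hw : ∀ i, 0 < w i) (x : ι → ℝ) :
    |∑ i ∈ s, x i| ^ p ≤ (∑ i ∈ s, w i) ^ (p - 1) * ∑ i ∈ s, |x i| ^ p / w i ^ (p - 1) := by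
  have hp0 : 0 < p := by linarith
  have hH := Real.inner_le_weight_mul_Lp_of_nonneg s hp w (fun i => |x i| / w i)
    (fun i => (hw i).le) (fun i => div_nonneg (abs_nonneg _) (hw i).le)
  have hwx : ∀ i, w i * (|x i| / w i) = |x i| := fun i => mul_div_cancel₀ _ (hw i).ne'
  have hwx' : ∀ i, w i * (|x i| / w i) ^ p = |x i| ^ p / w i ^ (p - 1) := fun i => by
    rw [Real.div_rpow (abs_nonneg _) (hw i).le, Real.rpow_sub_one (hw i).ne']
    field_simp
  simp only [hwx, hwx'] at hH
  have hW : 0 ≤ ∑ i ∈ s, w i := Finset.sum_nonneg fun i _ => (hw i).le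
  have hX : 0 ≤ ∑ i ∈ s, |x i| ^ p / w i ^ (p - 1) := Finset.sum_nonneg fun i _ => by
    have := hw i
    positivity
  calc |∑ i ∈ s, x i| ^ p ≤ (∑ i ∈ s, |x i|) ^ p :=
        Real.rpow_le_rpow (abs_nonneg _) (Finset.abs_sum_le_sum_abs _ _) hp0.le
    _ ≤ ((∑ i ∈ s, w i) ^ (1 - p⁻¹) * (∑ i ∈ s, |x i| ^ p / w i ^ (p - 1)) ^ p⁻¹) ^ p :=
        Real.rpow_le_rpow (Finset.sum_nonneg fun i _ => abs_nonneg _) hH hp0.le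
    _ = (∑ i ∈ s, w i) ^ (p - 1) * ∑ i ∈ s, |x i| ^ p / w i ^ (p - 1) := by
        rw [Real.mul_rpow (by positivity) (by positivity), ← Real.rpow_mul hW,
          ← Real.rpow_mul hX, inv_mul_cancel₀ hp0.ne', Real.rpow_one, sub_mul, one_mul,
          inv_mul_cancel₀ hp0.ne']

theorem abs_mul_rpow_rpow_div_eq {p l t : ℝ} (hp : 0 < p) (hl : 0 < l) (ht : 0 < t) (c : ℝ) :
    |c * t ^ l| ^ p / (l ^ (1 / p) * t ^ l) ^ (p - 1) = |c| ^ p * l ^ (1 / p - 1) * t ^ l := by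
  have htl : t ^ (l * p) = t ^ (l * (p - 1)) * t ^ l := by
    rw [← Real.rpow_add ht]; ring_nf
  have hlp : l ^ (1 / p - 1) = (l ^ (1 / p * (p - 1)))⁻¹ := by
    rw [← Real.rpow_neg hl.le]; congr 1; field_simp; ring
  rw [abs_mul, abs_of_pos (Real.rpow_pos_of_pos ht l), Real.mul_rpow (abs_nonneg c)
    (Real.rpow_pos_of_pos ht l).le, Real.mul_rpow (Real.rpow_pos_of_pos hl _).le
    (Real.rpow_pos_of_pos ht l).le, ← Real.rpow_mul hl.le, ← Real.rpow_mul ht.le,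
    ← Real.rpow_mul ht.le, htl, hlp]
  field_simp

theorem rpow_sub_one_le_of_le_mul_rpow_neg_inv {p B S x : ℝ} (hp : 1 ≤ p) (hB : 0 ≤ B)
    (hS : 0 ≤ S) (hx : 0 < x) (h : S ≤ B * x ^ (-(1 / p))) :
    S ^ (p - 1) ≤ B ^ (p - 1) * x ^ (1 / p - 1) := by
  calc S ^ (p - 1) ≤ (B * x ^ (-(1 / p))) ^ (p - 1) :=
        Real.rpow_le_rpow hS h (by linarith)
    _ = B ^ (p - 1) * x ^ (1 / p - 1) := by
        rw [Real.mul_rpow hB (Real.rpow_nonneg hx.le _), ← Real.rpow_mul hx.le]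
        congr 2
        field_simp
        ring

section WeightBound

variable {p B : ℝ} {lam : ℕ → ℝ}

theorem rpow_mul_integral_rpow_le_of_weight_bound (hp : 1 ≤ p) (hpos : ∀ n, 0 < lam n)
    (hB0 : 0 ≤ B) (hB : ∀ t ∈ Ioo (0 : ℝ) 1, ∀ F : Finset ℕ,
      ∑ n ∈ F, lam n ^ (1 / p) * t ^ lam n ≤ B * (1 - t) ^ (-(1 / p))) (n : ℕ) :
    (lam n ^ (1 / p) * ∫ t in Ioo (0 : ℝ) 1,
        t ^ lam n * (∑' k, lam k ^ (1 / p) * t ^ lam k) ^ (p - 1)) ^ (1 / p)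
      ≤ (B ^ (p - 1) * Real.Gamma (1 / p)) ^ (1 / p) := by
  have hp0 : 0 < p := by linarith
  have hS0 : ∀ t ∈ Ioo (0 : ℝ) 1, 0 ≤ ∑' k, lam k ^ (1 / p) * t ^ lam k := fun t ht =>
    tsum_nonneg fun k => mul_nonneg (Real.rpow_nonneg (hpos k).le _) (Real.rpow_nonneg ht.1.le _)
  have hpt : ∀ t ∈ Ioo (0 : ℝ) 1, t ^ lam n * (∑' k, lam k ^ (1 / p) * t ^ lam k) ^ (p - 1)
      ≤ B ^ (p - 1) * (t ^ lam n * (1 - t) ^ (1 / p - 1)) := by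
    intro t ht
    -- `tsum_le_of_sum_le'` needs no summability: a divergent `tsum` is `0`.
    have hS : ∑' k, lam k ^ (1 / p) * t ^ lam k ≤ B * (1 - t) ^ (-(1 / p)) :=
      tsum_le_of_sum_le' (mul_nonneg hB0 (Real.rpow_nonneg (by linarith [ht.2]) _)) (hB t ht)
    calc t ^ lam n * (∑' k, lam k ^ (1 / p) * t ^ lam k) ^ (p - 1)
        ≤ t ^ lam n * (B ^ (p - 1) * (1 - t) ^ (1 / p - 1)) := by
          gcongr
          · exact Real.rpow_nonneg ht.1.le _
          · exact rpow_sub_one_le_of_le_mul_rpow_neg_inv hp hB0 (hS0 t ht)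
              (by linarith [ht.2]) hS
      _ = B ^ (p - 1) * (t ^ lam n * (1 - t) ^ (1 / p - 1)) := by ring
  have hf0 : ∀ t ∈ Ioo (0 : ℝ) 1,
      0 ≤ t ^ lam n * (∑' k, lam k ^ (1 / p) * t ^ lam k) ^ (p - 1) := fun t ht =>
    mul_nonneg (Real.rpow_nonneg ht.1.le _) (Real.rpow_nonneg (hS0 t ht) _)
  refine Real.rpow_le_rpow (mul_nonneg (Real.rpow_nonneg (hpos n).le _)
    (setIntegral_nonneg measurableSet_Ioo hf0)) ?_ (by positivity)
  calc lam n ^ (1 / p) * ∫ t in Ioo (0 : ℝ) 1,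
        t ^ lam n * (∑' k, lam k ^ (1 / p) * t ^ lam k) ^ (p - 1)
      ≤ lam n ^ (1 / p) * ∫ t in Ioo (0 : ℝ) 1,
          B ^ (p - 1) * (t ^ lam n * (1 - t) ^ (1 / p - 1)) := by
        refine mul_le_mul_of_nonneg_left ?_ (Real.rpow_nonneg (hpos n).le _)
        refine integral_mono_of_nonneg ?_
          ((integrableOn_rpow_mul_one_sub_rpow (by positivity) (hpos n).le).const_mul _)
          (ae_restrict_of_forall_mem measurableSet_Ioo hpt)
        exact ae_restrict_of_forall_mem measurableSet_Ioo hf0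
    _ ≤ lam n ^ (1 / p) * (B ^ (p - 1) * (Real.Gamma (1 / p) * lam n ^ (-(1 / p)))) := by
        rw [integral_const_mul]
        refine mul_le_mul_of_nonneg_left (mul_le_mul_of_nonneg_left ?_ (Real.rpow_nonneg hB0 _))
          (Real.rpow_nonneg (hpos n).le _)
        exact integral_rpow_mul_one_sub_rpow_le (by positivity) (hpos n)
    _ = B ^ (p - 1) * Real.Gamma (1 / p) := by
        have := (Real.rpow_pos_of_pos (hpos n) (1 / p)).ne'
        rw [Real.rpow_neg (hpos n).le]
        field_simp

theorem integral_abs_sum_rpow_le_of_weight_bound (hp : 1 ≤ p) (hpos : ∀ n, 0 < lam n)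
    (hB0 : 0 ≤ B) (hB : ∀ t ∈ Ioo (0 : ℝ) 1, ∀ F : Finset ℕ,
      ∑ n ∈ F, lam n ^ (1 / p) * t ^ lam n ≤ B * (1 - t) ^ (-(1 / p)))
    (F : Finset ℕ) (b : ℕ → ℝ) :
    ∫ t in Ioo (0 : ℝ) 1, |∑ n ∈ F, b n * t ^ lam n| ^ p
      ≤ B ^ (p - 1) * Real.Gamma (1 / p) * ∑ n ∈ F, |b n| ^ p / lam n := by
  have hp0 : 0 < p := by linarith
  set c : ℕ → ℝ := fun n => B ^ (p - 1) * |b n| ^ p * lam n ^ (1 / p - 1)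
  have hc : ∀ n, 0 ≤ c n := fun n => by have := hpos n; positivity
  have hpt : ∀ t ∈ Ioo (0 : ℝ) 1, |∑ n ∈ F, b n * t ^ lam n| ^ p
      ≤ ∑ n ∈ F, c n * (t ^ lam n * (1 - t) ^ (1 / p - 1)) := by
    intro t ht
    have hw : ∀ n, 0 < lam n ^ (1 / p) * t ^ lam n := fun n =>
      mul_pos (Real.rpow_pos_of_pos (hpos n) _) (Real.rpow_pos_of_pos ht.1 _)
    calc |∑ n ∈ F, b n * t ^ lam n| ^ p
        ≤ (∑ n ∈ F, lam n ^ (1 / p) * t ^ lam n) ^ (p - 1)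
          * ∑ n ∈ F, |b n * t ^ lam n| ^ p / (lam n ^ (1 / p) * t ^ lam n) ^ (p - 1) :=
          abs_sum_rpow_le_sum_rpow_mul_sum_div F hp hw _
      _ = (∑ n ∈ F, lam n ^ (1 / p) * t ^ lam n) ^ (p - 1)
          * ∑ n ∈ F, |b n| ^ p * lam n ^ (1 / p - 1) * t ^ lam n := by
          congr 1
          exact Finset.sum_congr rfl fun n _ => abs_mul_rpow_rpow_div_eq hp0 (hpos n) ht.1 _
      _ ≤ B ^ (p - 1) * (1 - t) ^ (1 / p - 1)
          * ∑ n ∈ F, |b n| ^ p * lam n ^ (1 / p - 1) * t ^ lam n := by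
          gcongr
          · exact Finset.sum_nonneg fun n _ => by
              have := hpos n; have := ht.1; positivity
          · exact rpow_sub_one_le_of_le_mul_rpow_neg_inv hp hB0
              (Finset.sum_nonneg fun n _ => (hw n).le) (by linarith [ht.2]) (hB t ht F)
      _ = ∑ n ∈ F, c n * (t ^ lam n * (1 - t) ^ (1 / p - 1)) := by
          rw [Finset.mul_sum]
          exact Finset.sum_congr rfl fun n _ => by ring
  calc ∫ t in Ioo (0 : ℝ) 1, |∑ n ∈ F, b n * t ^ lam n| ^ p
      ≤ ∫ t in Ioo (0 : ℝ) 1, ∑ n ∈ F, c n * (t ^ lam n * (1 - t) ^ (1 / p - 1)) :=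
        integral_mono_of_nonneg (ae_of_all _ fun t => by positivity)
          (integrable_finsetSum _ fun n _ =>
            (integrableOn_rpow_mul_one_sub_rpow (by positivity) (hpos n).le).const_mul _)
          (ae_restrict_of_forall_mem measurableSet_Ioo hpt)
    _ = ∑ n ∈ F, c n * ∫ t in Ioo (0 : ℝ) 1, t ^ lam n * (1 - t) ^ (1 / p - 1) := by
        rw [integral_finsetSum _ fun n _ =>
          (integrableOn_rpow_mul_one_sub_rpow (by positivity) (hpos n).le).const_mul _]
        simp only [integral_const_mul]
    _ ≤ ∑ n ∈ F, c n * (Real.Gamma (1 / p) * lam n ^ (-(1 / p))) :=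
        Finset.sum_le_sum fun n _ => mul_le_mul_of_nonneg_left
          (integral_rpow_mul_one_sub_rpow_le (by positivity) (hpos n)) (hc n)
    _ = B ^ (p - 1) * Real.Gamma (1 / p) * ∑ n ∈ F, |b n| ^ p / lam n := by
        rw [Finset.mul_sum]
        refine Finset.sum_congr rfl fun n _ => ?_
        have hl : lam n ^ (1 / p - 1) * lam n ^ (-(1 / p)) = (lam n)⁻¹ := by
          rw [← Real.rpow_add (hpos n), show 1 / p - 1 + -(1 / p) = -1 by ring,
            Real.rpow_neg_one]
        simp only [c]
        rw [div_eq_mul_inv (|b n| ^ p), ← hl]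
        ring

end WeightBound

theorem stmt4 (p r : ℝ) (hp : 1 ≤ p) (hr : 1 < r)
    (lam : ℕ → ℝ) (hpos : ∀ n, 0 < lam n)
    (hlac : ∀ n, r * lam n ≤ lam (n+1)) :
    (∃ M : ℝ, ∀ n : ℕ,
        ((lam n) ^ (1/p) * ∫ t in Set.Icc (0:ℝ) 1,
            t ^ lam n * (∑' k, (lam k) ^ (1/p) * t ^ lam k) ^ (p-1)) ^ (1/p) ≤ M) ∧
    ∃ C : ℝ, 0 < C ∧ ∀ b : ℕ →₀ ℝ,
      (∫ t in Set.Icc (0:ℝ) 1, |∑ n ∈ b.support, b n * t ^ lam n| ^ p) ^ (1/p)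
        ≤ C * (∑ n ∈ b.support, |b n| ^ p / lam n) ^ (1/p) := by
  have hα0 : 0 < 1 / p := by positivity
  have hα1 : 1 / p ≤ 1 := (div_le_one (by positivity)).2 hp
  set B := 3 * (1 - (r ^ (1 / p))⁻¹)⁻¹
  have hB0 : 0 < B := by
    have := sub_pos.2 (inv_lt_one_of_one_lt₀ (Real.one_lt_rpow hr hα0))
    positivity
  have hB : ∀ t ∈ Ioo (0 : ℝ) 1, ∀ F : Finset ℕ,
      ∑ n ∈ F, lam n ^ (1 / p) * t ^ lam n ≤ B * (1 - t) ^ (-(1 / p)) :=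
    fun t ht F => sum_rpow_mul_rpow_le_of_lacunary hr hpos hlac hα0 hα1 ht F
  set K := B ^ (p - 1) * Real.Gamma (1 / p)
  have hK : 0 < K := mul_pos (Real.rpow_pos_of_pos hB0 _) (Real.Gamma_pos_of_pos hα0)
  refine ⟨⟨K ^ (1 / p), fun n => ?_⟩, K ^ (1 / p), Real.rpow_pos_of_pos hK _, fun b => ?_⟩
  · rw [integral_Icc_eq_integral_Ioo]
    exact rpow_mul_integral_rpow_le_of_weight_bound hp hpos hB0.le hB n
  · have hT : 0 ≤ ∑ n ∈ b.support, |b n| ^ p / lam n := Finset.sum_nonneg fun n _ => by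
      have := hpos n
      positivity
    rw [integral_Icc_eq_integral_Ioo, ← Real.mul_rpow hK.le hT]
    exact Real.rpow_le_rpow (setIntegral_nonneg measurableSet_Ioo fun t _ => by positivity)
      (integral_abs_sum_rpow_le_of_weight_bound hp hpos hB0.le hB b.support b) hα0.le
end

section
/- Let p ∈ (1,∞) and let Λ = (λ_n) be an increasing sequence of nonnegative reals that is NOT quasi-lacunary. Then the map J_Λ sending b ∈ ℓ^p(ω), ω_n = (pλ_n+1)^{-1}, to Σ_n b_n t^{λ_n} ∈ L^p([0,1]) is unbounded. Concretely: for every N ∈ ℕ there exists n_0 ∈ ℕ with p λ_{n_0+N} + 1 ≤ 2(p λ_{n_0} + 1), and then for A = {n_0, …, n_0+N−1} one has ‖Σ_{j∈A} t^{λ_j}‖_p^p ≥ N^p/(2(pλ_{n_0}+1)) while Σ_{j∈A} (pλ_j+1)^{-1} ≤ N/(pλ_{n_0}+1), so the ratio ‖J_Λ(1_A)‖_p^p / ‖1_A‖_{ℓ^p(ω)}^p ≥ N^{p-1}/2. -/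
/-!
If `Λ` is not quasi-lacunary then, for every block length `N`, some block
`λ_{n₀}, …, λ_{n₀+N}` grows by a factor at most `2` (otherwise the multiples of `N` would
index a lacunary extraction with gaps `N`). On `[0,1]` each monomial `t ^ λ_j` of the block
dominates `t ^ λ_{n₀+N}`, so
`‖∑_{j∈A} t ^ λ_j‖_p^p ≥ N^p / (pλ_{n₀+N} + 1) ≥ N^p / (2(pλ_{n₀} + 1))`,
while every weight `(pλ_j + 1)⁻¹` of the block is at most `(pλ_{n₀} + 1)⁻¹`.
-/

open MeasureTheory Set Finset

def IsQuasiLacunary (lam : ℕ → ℝ) : Prop :=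
  ∃ φ : ℕ → ℕ, StrictMono φ ∧ (∃ B : ℕ, ∀ k, φ (k+1) - φ k ≤ B) ∧
    ∃ r : ℝ, 1 < r ∧ ∀ k, r * lam (φ k) ≤ lam (φ (k+1))

lemma exists_le_mul_of_not_isQuasiLacunary {lam : ℕ → ℝ} (h : ¬ IsQuasiLacunary lam)
    (hlam0 : ∀ n, 0 ≤ lam n) (N : ℕ) {r : ℝ} (hr : 1 < r) :
    ∃ n, lam (n + N) ≤ r * lam n := by
  rcases N.eq_zero_or_pos with rfl | hN
  · exact ⟨0, le_mul_of_one_le_left (hlam0 0) hr.le⟩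
  by_contra! hgrow
  refine h ⟨(· * N), strictMono_mul_right_of_pos hN, ⟨N, fun k => ?_⟩, r, hr, fun k => ?_⟩
  · simp [Nat.add_mul]
  · simpa [Nat.add_mul] using (hgrow (k * N)).le

lemma card_mul_rpow_le_sum_rpow {ι : Type*} (s : Finset ι) {μ : ι → ℝ} {m t : ℝ}
    (hμ0 : ∀ j ∈ s, 0 ≤ μ j) (hμm : ∀ j ∈ s, μ j ≤ m) (ht : t ∈ Icc (0 : ℝ) 1) :
    #s * t ^ m ≤ ∑ j ∈ s, t ^ μ j := by
  rw [← nsmul_eq_mul]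
  exact card_nsmul_le_sum s _ _ fun j hj =>
    Real.rpow_le_rpow_of_exponent_ge' ht.1 ht.2 (hμ0 j hj) (hμm j hj)

lemma integral_Icc_zero_one_rpow {a : ℝ} (ha : -1 < a) :
    ∫ t in Icc (0 : ℝ) 1, t ^ a = 1 / (a + 1) := by
  rw [integral_Icc_eq_integral_Ioc, ← intervalIntegral.integral_of_le zero_le_one,
    integral_rpow (Or.inl ha), Real.one_rpow, Real.zero_rpow (by linarith), sub_zero]

lemma card_rpow_div_le_integral_abs_sum_rpow {ι : Type*} (s : Finset ι) {μ : ι → ℝ}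
    {m p : ℝ} (hμ0 : ∀ j ∈ s, 0 ≤ μ j) (hμm : ∀ j ∈ s, μ j ≤ m) (hm : 0 ≤ m) (hp : 0 < p) :
    (#s : ℝ) ^ p / (p * m + 1) ≤ ∫ t in Icc (0 : ℝ) 1, |∑ j ∈ s, t ^ μ j| ^ p := by
  have hcont : ContinuousOn (fun t : ℝ => |∑ j ∈ s, t ^ μ j| ^ p) (Icc 0 1) :=
    ((continuousOn_finsetSum _ fun j hj =>
      continuousOn_id.rpow_const fun _ _ => Or.inr (hμ0 j hj)).abs).rpow_const
      fun _ _ => Or.inr hp.le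
  have hpoint : ∀ t ∈ Icc (0 : ℝ) 1,
      (#s : ℝ) ^ p * t ^ (p * m) ≤ |∑ j ∈ s, t ^ μ j| ^ p := fun t ht => by
    calc (#s : ℝ) ^ p * t ^ (p * m) = (#s * t ^ m) ^ p := by
          rw [Real.mul_rpow (by positivity) (Real.rpow_nonneg ht.1 _), ← Real.rpow_mul ht.1,
            mul_comm m]
      _ ≤ |∑ j ∈ s, t ^ μ j| ^ p :=
          Real.rpow_le_rpow (by have := ht.1; positivity)
            ((card_mul_rpow_le_sum_rpow s hμ0 hμm ht).trans (le_abs_self _)) hp.le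
  calc (#s : ℝ) ^ p / (p * m + 1) = ∫ t in Icc (0 : ℝ) 1, (#s : ℝ) ^ p * t ^ (p * m) := by
        rw [integral_const_mul, integral_Icc_zero_one_rpow (by nlinarith), mul_one_div]
    _ ≤ _ := setIntegral_mono_on
        (ContinuousOn.integrableOn_Icc (continuousOn_const.mul
          (continuousOn_id.rpow_const fun _ _ => Or.inr (by positivity))))
        hcont.integrableOn_Icc measurableSet_Icc hpoint

lemma sum_range_inv_le_of_monotone {f : ℕ → ℝ} (hf : Monotone f) (n₀ N : ℕ)
    (hpos : 0 < f n₀) :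
    ∑ j ∈ range N, (f (n₀ + j))⁻¹ ≤ N / f n₀ := by
  calc ∑ j ∈ range N, (f (n₀ + j))⁻¹ ≤ #(range N) • (f n₀)⁻¹ :=
        sum_le_card_nsmul _ _ _ fun j _ => inv_anti₀ hpos (hf (Nat.le_add_right n₀ j))
    _ = N / f n₀ := by rw [card_range, nsmul_eq_mul, div_eq_mul_inv]

lemma rpow_sub_one_div_two_le_div {a D I S p : ℝ} (ha : 0 < a) (hD : 0 < D) (hS : 0 < S)
    (hI : a ^ p / (2 * D) ≤ I) (hSle : S ≤ a / D) : a ^ (p - 1) / 2 ≤ I / S := by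
  calc a ^ (p - 1) / 2 = a ^ p / (2 * D) / (a / D) := by
        rw [Real.rpow_sub_one ha.ne']
        field_simp
    _ ≤ a ^ p / (2 * D) / S := div_le_div_of_nonneg_left (by positivity) hS hSle
    _ ≤ I / S := div_le_div_of_nonneg_right hI hS.le

theorem stmt7 (p : ℝ) (hp : 1 < p)
    (lam : ℕ → ℝ) (hmono : StrictMono lam) (hlam0 : ∀ n, 0 ≤ lam n)
    (hnql : ¬ ∃ φ : ℕ → ℕ, StrictMono φ ∧ (∃ B : ℕ, ∀ k, φ (k+1) - φ k ≤ B) ∧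
        ∃ r : ℝ, 1 < r ∧ ∀ k, r * lam (φ k) ≤ lam (φ (k+1))) :
    ∀ N : ℕ, ∃ n₀ : ℕ,
      p * lam (n₀ + N) + 1 ≤ 2 * (p * lam n₀ + 1) ∧
      (N : ℝ) ^ p / (2 * (p * lam n₀ + 1))
        ≤ ∫ t in Set.Icc (0:ℝ) 1, |∑ j ∈ Finset.range N, t ^ lam (n₀ + j)| ^ p ∧
      ∑ j ∈ Finset.range N, (p * lam (n₀ + j) + 1)⁻¹ ≤ (N : ℝ) / (p * lam n₀ + 1) ∧
      (N : ℝ) ^ (p - 1) / 2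
        ≤ (∫ t in Set.Icc (0:ℝ) 1, |∑ j ∈ Finset.range N, t ^ lam (n₀ + j)| ^ p)
            / (∑ j ∈ Finset.range N, (p * lam (n₀ + j) + 1)⁻¹) := by
  intro N
  have hp0 : 0 < p := by linarith
  obtain ⟨n₀, hn₀⟩ := exists_le_mul_of_not_isQuasiLacunary hnql hlam0 N one_lt_two
  have hD : 0 < p * lam n₀ + 1 := by have := hlam0 n₀; positivity
  have hgrowth : p * lam (n₀ + N) + 1 ≤ 2 * (p * lam n₀ + 1) := by nlinarith [hlam0 n₀]
  have hI : (N : ℝ) ^ p / (2 * (p * lam n₀ + 1))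
      ≤ ∫ t in Icc (0:ℝ) 1, |∑ j ∈ range N, t ^ lam (n₀ + j)| ^ p := by
    calc (N : ℝ) ^ p / (2 * (p * lam n₀ + 1)) ≤ (N : ℝ) ^ p / (p * lam (n₀ + N) + 1) :=
          div_le_div_of_nonneg_left (by positivity)
            (by have := hlam0 (n₀ + N); positivity) hgrowth
      _ ≤ _ := by
          simpa using card_rpow_div_le_integral_abs_sum_rpow (range N)
            (fun j _ => hlam0 (n₀ + j)) (fun j hj => hmono.monotone (by simp at hj; omega))
            (hlam0 _) hp0
  have hweight_mono : Monotone fun n => p * lam n + 1 := fun a b hab => by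
    simpa using mul_le_mul_of_nonneg_left (hmono.monotone hab) hp0.le
  have hS := sum_range_inv_le_of_monotone hweight_mono n₀ N hD
  refine ⟨n₀, hgrowth, hI, hS, ?_⟩
  rcases N.eq_zero_or_pos with rfl | hN
  · simp [Real.zero_rpow (sub_ne_zero.mpr hp.ne')]
  refine rpow_sub_one_div_two_le_div (by positivity) hD ?_ hI hS
  exact sum_pos (fun j _ => by have := hlam0 (n₀ + j); positivity)
    (nonempty_range_iff.mpr hN.ne')
end

section
/- Let p ∈ (1,∞) and Λ = (λ_n) an increasing sequence of positive reals. If the normalized monomials f_n(t) = (pλ_n+1)^{1/p} t^{λ_n} in L^p([0,1]) form a sequence asymptotically isometric to the canonical ℓ^p basis, then Λ is super-lacunary, i.e. λ_{n+1}/λ_n → ∞. In particular, the estimate ∫_0^1 f_{n+1} f_n^{p-1} dt ≥ (pλ_n+1)/(pλ_{n+1}+1) holds for all n, and the asymptotic isometry forces ∫_0^1 f_{n+1} f_n^{p-1} dt → 0. -/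
open MeasureTheory Set Filter

private lemma auxCont {r : ℝ} (hr : 0 ≤ r) : Continuous fun x : ℝ => x ^ r :=
  continuous_iff_continuousAt.2 fun x => Real.continuousAt_rpow_const x r (Or.inr hr)

private lemma auxInt {r : ℝ} (hr : 0 < r) : ∫ t in Icc (0:ℝ) 1, t ^ r = 1 / (r + 1) := by
  rw [integral_Icc_eq_integral_Ioc, ← intervalIntegral.integral_of_le (zero_le_one),
    integral_rpow (Or.inl (by linarith)), Real.one_rpow,
    Real.zero_rpow (by positivity)]
  norm_num

private lemma auxMono (C : ℝ) {r : ℝ} (hr : 0 < r) :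
    ∫ t in Icc (0:ℝ) 1, C * t ^ r = C / (r + 1) := by
  rw [integral_const_mul, auxInt hr]
  ring

private lemma auxBern {x y p : ℝ} (hx : 0 ≤ x) (hy : 0 ≤ y) (hp : 1 < p) :
    x ^ p + p * x ^ (p - 1) * y ≤ (x + y) ^ p := by
  rcases hx.eq_or_lt with h0 | h0
  · rw [← h0, Real.zero_rpow (ne_of_gt (by linarith : (0:ℝ) < p)),
      Real.zero_rpow (ne_of_gt (by linarith : (0:ℝ) < p - 1))]
    simpa using Real.rpow_nonneg hy p
  · have hyx : 0 ≤ y / x := div_nonneg hy h0.le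
    have key := one_add_mul_self_le_rpow_one_add (by linarith : (-1:ℝ) ≤ y / x) hp.le
    have hxp : (0:ℝ) < x ^ p := Real.rpow_pos_of_pos h0 p
    have h1 : (x + y) ^ p = x ^ p * (1 + y / x) ^ p := by
      rw [← Real.mul_rpow h0.le (by linarith)]
      congr 1
      field_simp
    have h2 : x ^ p * (y / x) = x ^ (p - 1) * y := by
      rw [Real.rpow_sub h0, Real.rpow_one]
      field_simp
    calc x ^ p + p * x ^ (p-1) * y = x ^ p * (1 + p * (y / x)) := by
          linear_combination (-p) * h2
      _ ≤ x ^ p * (1 + y/x) ^ p := mul_le_mul_of_nonneg_left key hxp.le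
      _ = (x + y) ^ p := h1.symm

theorem stmt9 (p : ℝ) (hp : 1 < p)
    (lam : ℕ → ℝ) (hmono : StrictMono lam) (hpos : ∀ n, 0 < lam n)
    (f : ℕ → ℝ → ℝ) (hf : ∀ n t, f n t = (p * lam n + 1) ^ (1/p) * t ^ lam n)
    (hasy : ∀ ε ∈ Set.Ioo (0:ℝ) 1, ∃ N : ℕ, ∀ a : ℕ →₀ ℝ, (∀ n < N, a n = 0) →
      (1 - ε) * (∑ n ∈ a.support, |a n| ^ p) ^ (1/p)
          ≤ (∫ t in Set.Icc (0:ℝ) 1, |∑ n ∈ a.support, a n * f n t| ^ p) ^ (1/p) ∧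
      (∫ t in Set.Icc (0:ℝ) 1, |∑ n ∈ a.support, a n * f n t| ^ p) ^ (1/p)
          ≤ (1 + ε) * (∑ n ∈ a.support, |a n| ^ p) ^ (1/p)) :
    Filter.Tendsto (fun n => lam (n+1) / lam n) Filter.atTop Filter.atTop ∧
    (∀ n : ℕ, (p * lam n + 1) / (p * lam (n+1) + 1)
        ≤ ∫ t in Set.Icc (0:ℝ) 1, f (n+1) t * (f n t) ^ (p-1)) ∧
    Filter.Tendsto (fun n => ∫ t in Set.Icc (0:ℝ) 1, f (n+1) t * (f n t) ^ (p-1))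
      Filter.atTop (nhds 0) := by
  have hp0 : (0:ℝ) < p := by linarith
  have hp1 : (0:ℝ) < p - 1 := by linarith
  have hpne : p ≠ 0 := ne_of_gt hp0
  have hApos : ∀ n, (0:ℝ) < p * lam n + 1 := fun n => by nlinarith [hpos n]
  have hfnn : ∀ n, ∀ t ∈ Icc (0:ℝ) 1, 0 ≤ f n t := by
    intro n t ht
    rw [hf]
    exact mul_nonneg (Real.rpow_nonneg (hApos n).le _) (Real.rpow_nonneg ht.1 _)
  have hcontf : ∀ n, Continuous (f n) := by
    intro n
    have : f n = fun t => (p * lam n + 1) ^ (1/p) * t ^ lam n := funext (hf n)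
    rw [this]
    exact continuous_const.mul (auxCont (hpos n).le)
  have hnorm : ∀ n, ∫ t in Icc (0:ℝ) 1, (f n t) ^ p = 1 := by
    intro n
    have h1 : ∀ t ∈ Icc (0:ℝ) 1, (f n t) ^ p = (p * lam n + 1) * t ^ (lam n * p) := by
      intro t ht
      rw [hf, Real.mul_rpow (Real.rpow_nonneg (hApos n).le _) (Real.rpow_nonneg ht.1 _),
        ← Real.rpow_mul (hApos n).le, ← Real.rpow_mul ht.1, one_div,
        inv_mul_cancel₀ hpne, Real.rpow_one]
    rw [setIntegral_congr_fun measurableSet_Icc h1, auxMono _ (mul_pos (hpos n) hp0)]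
    rw [show lam n * p + 1 = p * lam n + 1 by ring]
    exact div_self (ne_of_gt (hApos n))
  have hInn : ∀ n, 0 ≤ ∫ t in Icc (0:ℝ) 1, f (n+1) t * (f n t) ^ (p-1) :=
    fun n => setIntegral_nonneg measurableSet_Icc fun t ht =>
      mul_nonneg (hfnn _ t ht) (Real.rpow_nonneg (hfnn _ t ht) _)
  -- exact value of the correlation integral
  have hIval : ∀ n, ∫ t in Icc (0:ℝ) 1, f (n+1) t * (f n t) ^ (p-1)
      = ((p * lam (n+1) + 1) ^ (1/p) * (p * lam n + 1) ^ ((p-1)/p))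
          / (lam (n+1) + lam n * (p-1) + 1) := by
    intro n
    have hrpos : 0 < lam (n+1) + lam n * (p-1) := by nlinarith [hpos n, hpos (n+1)]
    have h1 : ∀ t ∈ Icc (0:ℝ) 1, f (n+1) t * (f n t) ^ (p-1)
        = ((p * lam (n+1) + 1) ^ (1/p) * (p * lam n + 1) ^ ((p-1)/p))
            * t ^ (lam (n+1) + lam n * (p-1)) := by
      intro t ht
      rw [hf, hf,
        Real.mul_rpow (Real.rpow_nonneg (hApos n).le _) (Real.rpow_nonneg ht.1 _),
        ← Real.rpow_mul (hApos n).le, ← Real.rpow_mul ht.1,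
        Real.rpow_add' ht.1 (ne_of_gt hrpos),
        show 1/p * (p-1) = (p-1)/p by ring]
      ring
    rw [setIntegral_congr_fun measurableSet_Icc h1, auxMono _ hrpos]
  -- lower bound for the correlation integral
  have hIlb : ∀ n, (p * lam n + 1) / (p * lam (n+1) + 1)
      ≤ ∫ t in Icc (0:ℝ) 1, f (n+1) t * (f n t) ^ (p-1) := by
    intro n
    rw [hIval n]
    have hAB : p * lam n + 1 ≤ p * lam (n+1) + 1 := by
      nlinarith [hmono (lt_add_one n)]
    have hK : (p * lam n + 1)
        ≤ (p * lam (n+1) + 1) ^ (1/p) * (p * lam n + 1) ^ ((p-1)/p) := by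
      have h1 : (p * lam n + 1) ^ (1/p) ≤ (p * lam (n+1) + 1) ^ (1/p) :=
        Real.rpow_le_rpow (hApos n).le hAB (by positivity)
      calc (p * lam n + 1)
          = (p * lam n + 1) ^ (1/p) * (p * lam n + 1) ^ ((p-1)/p) := by
            rw [← Real.rpow_add (hApos n), show 1/p + (p-1)/p = 1 by field_simp; ring,
              Real.rpow_one]
        _ ≤ _ := mul_le_mul_of_nonneg_right h1 (Real.rpow_nonneg (hApos n).le _)
    have hden : lam (n+1) + lam n * (p-1) + 1
        = ((p * lam (n+1) + 1) + (p-1) * (p * lam n + 1)) / p := by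
      field_simp
      ring
    rw [hden, div_div_eq_mul_div, div_le_div_iff₀ (hApos (n+1)) (by nlinarith [hApos n, hApos (n+1)])]
    nlinarith [mul_le_mul_of_nonneg_right hK (mul_nonneg hp0.le (hApos (n+1)).le),
      mul_nonneg (mul_nonneg hp1.le (hApos n).le) (sub_nonneg.2 hAB),
      hApos n, hApos (n+1)]
  -- the main convergence
  have hItend : Tendsto (fun n => ∫ t in Icc (0:ℝ) 1, f (n+1) t * (f n t) ^ (p-1))
      atTop (nhds 0) := by
    rw [Metric.tendsto_atTop]
    intro δ hδ
    set c := min (1/2 : ℝ) ((p * δ / 2) ^ (1/(p-1))) with hcdef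
    have hc0 : 0 < c := lt_min (by norm_num) (Real.rpow_pos_of_pos (by positivity) _)
    have hc1 : c < 1 := lt_of_le_of_lt (min_le_left _ _) (by norm_num)
    have hcp1 : c ^ (p-1) ≤ p * δ / 2 := by
      calc c ^ (p-1) ≤ ((p * δ / 2) ^ (1/(p-1))) ^ (p-1) :=
            Real.rpow_le_rpow hc0.le (min_le_right _ _) hp1.le
        _ = p * δ / 2 := by
            rw [← Real.rpow_mul (by positivity), one_div,
              inv_mul_cancel₀ (ne_of_gt hp1), Real.rpow_one]
    have hcsplit : c ^ p = c * c ^ (p-1) := by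
      have h := Real.rpow_add hc0 1 (p-1)
      rw [Real.rpow_one, show 1 + (p-1) = p by ring] at h
      exact h
    have hckey : 1 + c ^ p < 1 + p * c * δ := by
      rw [hcsplit]
      nlinarith [mul_le_mul_of_nonneg_left hcp1 hc0.le, mul_pos (mul_pos hp0 hc0) hδ]
    -- choose ε by continuity
    have hcont2 : Tendsto (fun e : ℝ => (1+e)^p * (1 + c^p)) (nhds 0) (nhds (1 + c^p)) := by
      have h := (((continuousAt_const.add continuousAt_id).rpow_const
        (Or.inr hp0.le)).mul continuousAt_const :
        ContinuousAt (fun e : ℝ => (1+e)^p * (1 + c^p)) 0)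
      have h' := h.tendsto
      simp only [Pi.mul_apply, Pi.add_apply, id, add_zero, Real.one_rpow, one_mul] at h'
      exact h'
    have hev : ∀ᶠ e in nhds (0:ℝ), (1+e)^p * (1+c^p) < 1 + p*c*δ :=
      hcont2.eventually_lt_const hckey
    rw [Metric.eventually_nhds_iff] at hev
    obtain ⟨r, hr0, hr⟩ := hev
    set ε := min (r/2) (1/2 : ℝ) with hεdef
    have hε0 : 0 < ε := lt_min (by positivity) (by norm_num)
    have hε1 : ε < 1 := lt_of_le_of_lt (min_le_right _ _) (by norm_num)
    have hεball : (1+ε)^p * (1+c^p) < 1 + p*c*δ := by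
      apply hr
      rw [Real.dist_eq, sub_zero, abs_of_pos hε0]
      calc ε ≤ r/2 := min_le_left _ _
        _ < r := by linarith
    obtain ⟨N, hN⟩ := hasy ε ⟨hε0, hε1⟩
    refine ⟨N, fun n hn => ?_⟩
    set a : ℕ →₀ ℝ := Finsupp.single n 1 + Finsupp.single (n+1) c with hadef
    have ha0 : ∀ m < N, a m = 0 := by
      intro m hm
      have h1 : ¬ n = m := by omega
      have h2 : ¬ n + 1 = m := by omega
      simp [hadef, Finsupp.single_apply, h1, h2]
    have hdisj : Disjoint (Finsupp.single n (1:ℝ)).support (Finsupp.single (n+1) c).support := by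
      rw [Finsupp.support_single_ne_zero _ one_ne_zero,
        Finsupp.support_single_ne_zero _ (ne_of_gt hc0)]
      exact Finset.disjoint_singleton.2 (by omega)
    have hsupp : a.support = {n, n+1} := by
      rw [hadef, Finsupp.support_add_eq hdisj, Finsupp.support_single_ne_zero _ one_ne_zero,
        Finsupp.support_single_ne_zero _ (ne_of_gt hc0)]
      ext m
      simp
    have han : a n = 1 := by
      simp [hadef, Finsupp.single_apply]
    have han1 : a (n+1) = c := by
      simp [hadef, Finsupp.single_apply]
    have hsum2 : ∑ m ∈ a.support, |a m| ^ p = 1 + c ^ p := by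
      rw [hsupp, Finset.sum_pair (by omega : n ≠ n+1), han, han1, abs_one,
        Real.one_rpow, abs_of_pos hc0]
    obtain ⟨-, hub⟩ := hN a ha0
    rw [hsum2] at hub
    have hXeq : ∫ t in Icc (0:ℝ) 1, |∑ m ∈ a.support, a m * f m t| ^ p
        = ∫ t in Icc (0:ℝ) 1, |f n t + c * f (n+1) t| ^ p := by
      apply setIntegral_congr_fun measurableSet_Icc
      intro t ht
      show |∑ m ∈ a.support, a m * f m t| ^ p = |f n t + c * f (n+1) t| ^ p
      rw [hsupp, Finset.sum_pair (by omega : n ≠ n+1), han, han1, one_mul]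
    rw [hXeq] at hub
    have hX0 : 0 ≤ ∫ t in Icc (0:ℝ) 1, |f n t + c * f (n+1) t| ^ p :=
      setIntegral_nonneg measurableSet_Icc fun t _ => Real.rpow_nonneg (abs_nonneg _) _
    have hXub : ∫ t in Icc (0:ℝ) 1, |f n t + c * f (n+1) t| ^ p ≤ (1+ε)^p * (1 + c^p) := by
      have h1 := Real.rpow_le_rpow (Real.rpow_nonneg hX0 _) hub hp0.le
      rw [← Real.rpow_mul hX0, one_div, inv_mul_cancel₀ hpne, Real.rpow_one,
        Real.mul_rpow (by linarith) (Real.rpow_nonneg (by positivity) _),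
        ← Real.rpow_mul (by positivity : (0:ℝ) ≤ 1 + c^p),
        inv_mul_cancel₀ hpne, Real.rpow_one] at h1
      exact h1
    have hc1f : IntegrableOn (fun t => (f n t) ^ p) (Icc (0:ℝ) 1) volume :=
      ((auxCont hp0.le).comp (hcontf n)).integrableOn_Icc
    have hc2f : IntegrableOn (fun t => p * c * (f (n+1) t * (f n t) ^ (p-1)))
        (Icc (0:ℝ) 1) volume :=
      (continuous_const.mul ((hcontf (n+1)).mul
        ((auxCont hp1.le).comp (hcontf n)))).integrableOn_Icc
    have hcabs : IntegrableOn (fun t => |f n t + c * f (n+1) t| ^ p) (Icc (0:ℝ) 1) volume :=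
      ((auxCont hp0.le).comp
        (((hcontf n).add (continuous_const.mul (hcontf (n+1)))).abs)).integrableOn_Icc
    have hmon : ∫ t in Icc (0:ℝ) 1, ((f n t) ^ p + p * c * (f (n+1) t * (f n t) ^ (p-1)))
        ≤ ∫ t in Icc (0:ℝ) 1, |f n t + c * f (n+1) t| ^ p := by
      apply setIntegral_mono_on (hc1f.add hc2f) hcabs measurableSet_Icc
      intro t ht
      show (f n t) ^ p + p * c * (f (n+1) t * (f n t) ^ (p-1))
          ≤ |f n t + c * f (n+1) t| ^ p
      have hx := hfnn n t ht
      have hy : 0 ≤ c * f (n+1) t := mul_nonneg hc0.le (hfnn (n+1) t ht)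
      rw [abs_of_nonneg (add_nonneg hx hy)]
      have hb := auxBern hx hy hp
      have heq : p * c * (f (n+1) t * (f n t) ^ (p-1))
          = p * (f n t) ^ (p-1) * (c * f (n+1) t) := by ring
      linarith
    rw [integral_add hc1f hc2f, hnorm n, integral_const_mul] at hmon
    have hfinal : 1 + p * c * ∫ t in Icc (0:ℝ) 1, f (n+1) t * (f n t) ^ (p-1)
        < 1 + p * c * δ := lt_of_le_of_lt (hmon.trans hXub) hεball
    have hIlt : (∫ t in Icc (0:ℝ) 1, f (n+1) t * (f n t) ^ (p-1)) < δ := by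
      have hpc : 0 < p * c := mul_pos hp0 hc0
      nlinarith [hfinal]
    rw [Real.dist_eq, sub_zero, abs_of_nonneg (hInn n)]
    exact hIlt
  refine ⟨?_, hIlb, hItend⟩
  have h0 : Tendsto (fun n => (p * lam n + 1) / (p * lam (n+1) + 1)) atTop (nhds 0) :=
    squeeze_zero (fun n => div_nonneg (hApos n).le (hApos (n+1)).le) hIlb hItend
  have h1 : Tendsto (fun n => (p * lam n + 1) / (p * lam (n+1) + 1)) atTop
      (nhdsWithin 0 (Ioi 0)) :=
    tendsto_nhdsWithin_iff.2 ⟨h0, Eventually.of_forall fun n => div_pos (hApos n) (hApos (n+1))⟩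
  have h2 := h1.inv_tendsto_nhdsGT_zero
  have h3 : Tendsto (fun n => (p * lam (n+1) + 1) / (p * lam n + 1)) atTop atTop := by
    refine h2.congr fun n => ?_
    rw [Pi.inv_apply, inv_div]
  apply tendsto_atTop_mono _ h3
  intro n
  rw [div_le_div_iff₀ (hApos n) (hpos n)]
  nlinarith [hmono (lt_add_one n), hpos n, hpos (n+1)]
end
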